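/- Let P : ℝ^f → ℝ be a homogeneous polynomial of degree n. Define the multiplication structure: for i + j = n, the map Sym^i(ℝ^f) × Sym^j(ℝ^f) → ℝ induced by the polarization of P. Let N^i ⊂ Sym^i(ℝ^f) be the null space of this pairing against Sym^j(ℝ^f). Then for any i, j, k with i + j + k ≤ n, the image of N^i ⊗ Sym^j(ℝ^f) under the symmetrized product Sym^i ⊗ Sym^j → Sym^{i+j} lies in N^{i+j}. Consequently the quotients H^i = Sym^i/N^i form a graded commutative ring under the induced products. -/

import Mathlib

open MvPolynomial

/-- The apolar (polarization) pairing of two polynomials: `⟨P, Q⟩ = ∑_d d! ⬝ Q_d ⬝ P_d`.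
For `Q` a product of homogeneous polynomials of complementary degrees this computes the value of
the full polarization of the degree-`n` form `P` on the corresponding symmetric tensors. -/
noncomputable def apolarPairing (f : ℕ) (P Q : MvPolynomial (Fin f) ℝ) : ℝ :=
  ∑ d ∈ Q.support, (∏ i, (Nat.factorial (d i) : ℝ)) * Q.coeff d * P.coeff d

/-- `N^i`: the null space of the pairing `Sym^i × Sym^{n-i} → ℝ` induced by the polarization of
`P`, modelled by homogeneous polynomials of degree `i` paired via the apolar pairing. -/
def nullSpace (f n : ℕ) (P : MvPolynomial (Fin f) ℝ) (i : ℕ) :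
    Set (MvPolynomial (Fin f) ℝ) :=
  {p | p ∈ homogeneousSubmodule (Fin f) ℝ i ∧
    ∀ q ∈ homogeneousSubmodule (Fin f) ℝ (n - i), apolarPairing f P (p * q) = 0}

variable {f n : ℕ} {P : MvPolynomial (Fin f) ℝ}

lemma apolarPairing_add (Q R : MvPolynomial (Fin f) ℝ) :
    apolarPairing f P (Q + R) = apolarPairing f P Q + apolarPairing f P R :=
  Finsupp.sum_add_index' (h := fun d c => (∏ i, (Nat.factorial (d i) : ℝ)) * c * P.coeff d)
    (fun d => by simp) (fun d c c' => by ring)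

lemma add_mem_nullSpace {i : ℕ} {p p' : MvPolynomial (Fin f) ℝ}
    (hp : p ∈ nullSpace f n P i) (hp' : p' ∈ nullSpace f n P i) :
    p + p' ∈ nullSpace f n P i :=
  ⟨Submodule.add_mem _ hp.1 hp'.1, fun r hr => by
    rw [add_mul, apolarPairing_add, hp.2 r hr, hp'.2 r hr, add_zero]⟩

/-- The pairing of `p * q` against `r` is that of `p` against `q * r`, and `q * r` has the
complementary degree `n - i`. -/
lemma mul_mem_nullSpace {i j : ℕ} (hij : i + j ≤ n) {p q : MvPolynomial (Fin f) ℝ}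
    (hp : p ∈ nullSpace f n P i) (hq : q ∈ homogeneousSubmodule (Fin f) ℝ j) :
    p * q ∈ nullSpace f n P (i + j) := by
  refine ⟨hp.1.mul hq, fun r hr => ?_⟩
  have hqr : q * r ∈ homogeneousSubmodule (Fin f) ℝ (n - i) := by
    have hdeg : j + (n - (i + j)) = n - i := by omega
    exact hdeg ▸ hq.mul hr
  rw [mul_assoc]
  exact hp.2 _ hqr

theorem nullSpace_mul_general (f n : ℕ) (P : MvPolynomial (Fin f) ℝ)
    (i j : ℕ) (hij : i + j ≤ n) :
    (∀ p ∈ nullSpace f n P i, ∀ q ∈ homogeneousSubmodule (Fin f) ℝ j,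
        p * q ∈ nullSpace f n P (i + j)) ∧
    (∀ p p' q q' : MvPolynomial (Fin f) ℝ,
        p ∈ homogeneousSubmodule (Fin f) ℝ i → p' ∈ homogeneousSubmodule (Fin f) ℝ i →
        q ∈ homogeneousSubmodule (Fin f) ℝ j → q' ∈ homogeneousSubmodule (Fin f) ℝ j →
        p - p' ∈ nullSpace f n P i → q - q' ∈ nullSpace f n P j →
        p * q - p' * q' ∈ nullSpace f n P (i + j)) := by
  refine ⟨fun p hp q hq => mul_mem_nullSpace hij hp hq, ?_⟩
  intro p p' q q' _ hp' hq _ hpp' hqq'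
  have hdecomp : p * q - p' * q' = (p - p') * q + (q - q') * p' := by ring
  have hleft := mul_mem_nullSpace hij hpp' hq
  have hright := mul_mem_nullSpace (by omega) hqq' hp'
  rw [add_comm j i] at hright
  rw [hdecomp]
  exact add_mem_nullSpace hleft hright

/-- For a homogeneous polynomial `P` of degree `n`, the product of an element of `N^i` with any
element of `Sym^j` lies in `N^{i+j}` (for `i + j ≤ n`); consequently the product descends to the
quotients `H^i = Sym^i / N^i`, making them a graded commutative ring. -/
theorem nullSpace_mul (f n : ℕ) (P : MvPolynomial (Fin f) ℝ)
    (hP : P ∈ homogeneousSubmodule (Fin f) ℝ n)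
    (i j : ℕ) (hij : i + j ≤ n) :
    (∀ p ∈ nullSpace f n P i, ∀ q ∈ homogeneousSubmodule (Fin f) ℝ j,
        p * q ∈ nullSpace f n P (i + j)) ∧
    (∀ p p' q q' : MvPolynomial (Fin f) ℝ,
        p ∈ homogeneousSubmodule (Fin f) ℝ i → p' ∈ homogeneousSubmodule (Fin f) ℝ i →
        q ∈ homogeneousSubmodule (Fin f) ℝ j → q' ∈ homogeneousSubmodule (Fin f) ℝ j →
        p - p' ∈ nullSpace f n P i → q - q' ∈ nullSpace f n P j →
        p * q - p' * q' ∈ nullSpace f n P (i + j)) :=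
  nullSpace_mul_general f n P i j hij
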